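/- arXiv:1703.07991 — 2 statements merged into one kernel-verified Lean document; each statement's English description precedes it below -/
import Mathlib

section
/- Let ω be an (n−1)-form of bidegree (k, n−k−1) on SV that is primitive (dα ∧ ω = α ∧ τ for some form τ) and satisfies Dω = dω (i.e. dω is divisible by α). For f ∈ C^∞(S^{n-1}), with X_f the vector field on SV determined by i_{X_f}α = 0 and i_{X_f}dα = df, and ξ := i_{X_f}ω, one has d(fω + α ∧ ξ) = f·dω − α ∧ (i_{X_f}τ + dξ), and in particular d(fω + α ∧ ξ) is divisible by α, so D(fω) = f·Dω − α ∧ (i_{X_f}τ + dξ). -/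
/-- Abstract formulation (in the graded algebra of translation invariant forms on the
sphere bundle `SV`, with exterior differential `d` and contraction `i_{X_f}`) of the
formula for the Rumin operator of `f·ω`:

If `ω` is a primitive form of bidegree `(k, n−k−1)` with `dα ∧ ω = α ∧ τ` and
`Dω = dω` (i.e. `dω` is divisible by `α`), `f` is a function on the sphere,
`X_f` the vector field with `i_{X_f} α = 0`, `i_{X_f} dα = df`, and `ξ := i_{X_f} ω`,
then `d(fω + α ∧ ξ) = f·dω − α ∧ (i_{X_f} τ + dξ)`; in particular this form is
divisible by `α`, so it equals `D(fω)`.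

The hypotheses record the standard facts of Cartan calculus used
(Leibniz rules for `d` and for the antiderivation `i_{X_f}`, and that `f` has degree `0`). -/
theorem rumin_of_function_multiple (A : Type*) [Ring A] [Algebra ℝ A]
    (d iX : A →ₗ[ℝ] A) (α ω τ ξ f fdf : A)
    (hξ : ξ = iX ω)
    (hprim : d α * ω = α * τ)
    (hvert : ∃ σ, d ω = α * σ)
    (hdf : d f = fdf)
    (hiXα : iX α = 0)
    (hiXdα : iX (d α) = fdf)
    (hfα : f * α = α * f)
    (hLeibf : d (f * ω) = fdf * ω + f * d ω)
    (hLeibα : d (α * ξ) = d α * ξ - α * d ξ)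
    (hiXprim : iX (d α * ω) = iX (d α) * ω + d α * iX ω)
    (hiXατ : iX (α * τ) = iX α * τ - α * iX τ) :
    d (f * ω + α * ξ) = f * d ω - α * (iX τ + d ξ) ∧
      ∃ σ, d (f * ω + α * ξ) = α * σ := by
  have key : fdf * ω + d α * ξ = -(α * iX τ) := by
    have h1 : iX (d α * ω) = iX (α * τ) := by rw [hprim]
    rw [hiXprim, hiXατ, hiXα, hiXdα, ← hξ, zero_mul, zero_sub] at h1
    exact h1
  have hmain : d (f * ω + α * ξ) = f * d ω - α * (iX τ + d ξ) := by
    rw [map_add, hLeibf, hLeibα, mul_add]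
    have h2 : fdf * ω + f * d ω + (d α * ξ - α * d ξ)
        = f * d ω + ((fdf * ω + d α * ξ) - α * d ξ) := by abel
    rw [h2, key]; abel
  refine ⟨hmain, ?_⟩
  obtain ⟨σ, hσ⟩ := hvert
  refine ⟨f * σ - (iX τ + d ξ), ?_⟩
  rw [hmain, hσ, ← mul_assoc, hfα, mul_assoc, ← mul_sub]
end

section
/- The space J^{n,tr} = {τ ∈ Ω^n(SV)^{tr} : α ∧ τ = 0 and dα ∧ τ = 0} of translation-invariant vertical primitive n-forms is closed under the product τ₁ * τ₂ := *₁^{-1}(*₁τ₁ ∧ *₁τ₂), where *₁ is the partial Hodge star acting on the base part. -/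
/-- The space `J^{n,tr} = {τ : α ∧ τ = 0, dα ∧ τ = 0}` of translation invariant vertical
primitive `n`-forms on the sphere bundle `SV` is closed under the convolution product
`τ₁ * τ₂ := *₁⁻¹(*₁τ₁ ∧ *₁τ₂)`.

Abstract formulation in the algebra of translation invariant forms: `star1` is the
partial Hodge star (a linear equivalence), and the hypotheses record the key facts
`α ∧ τ = 0 ↔ i_T(*₁τ) = 0`, `dα ∧ τ = 0 ↔ L_T(*₁τ) = 0`, that `i_T` is an
antiderivation (with sign `s = ±1` determined by the degree) and `L_T` a derivation. -/
theorem vertical_primitive_closed_under_convolution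
    (A : Type*) [Ring A] [Algebra ℝ A]
    (α dα : A) (star1 : A ≃ₗ[ℝ] A) (iT LT : A →ₗ[ℝ] A) (τ₁ τ₂ : A) (s : ℝ)
    (hs : s = 1 ∨ s = -1)
    (hiT : ∀ τ : A, α * τ = 0 ↔ iT (star1 τ) = 0)
    (hLT : ∀ τ : A, dα * τ = 0 ↔ LT (star1 τ) = 0)
    (hiTmul : iT (star1 τ₁ * star1 τ₂) =
      iT (star1 τ₁) * star1 τ₂ + s • (star1 τ₁ * iT (star1 τ₂)))
    (hLTmul : LT (star1 τ₁ * star1 τ₂) =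
      LT (star1 τ₁) * star1 τ₂ + star1 τ₁ * LT (star1 τ₂))
    (h1 : α * τ₁ = 0) (h1' : dα * τ₁ = 0) (h2 : α * τ₂ = 0) (h2' : dα * τ₂ = 0) :
    α * star1.symm (star1 τ₁ * star1 τ₂) = 0 ∧
      dα * star1.symm (star1 τ₁ * star1 τ₂) = 0 := by
  have e : star1 (star1.symm (star1 τ₁ * star1 τ₂)) = star1 τ₁ * star1 τ₂ :=
    star1.apply_symm_apply _
  constructor
  · rw [hiT, e, hiTmul, (hiT τ₁).mp h1, (hiT τ₂).mp h2, zero_mul, mul_zero, smul_zero,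
      add_zero]
  · rw [hLT, e, hLTmul, (hLT τ₁).mp h1', (hLT τ₂).mp h2', zero_mul, mul_zero, add_zero]
end
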